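/- Suppose the martingale (W_n)_{n≥0} is uniformly integrable. Let M_∞ := sup_{n≥0} W_n. Then E[M_∞] < ∞. -/

import Mathlib

/-!
Uniform integrability together with `E[W_m] = 1` gives `δ > 0` with `P(W_m ≥ 1/2) ≥ δ` for all
`m`. Split `{max_{k ≤ n} W_k > t}` according to the first time `k` at which `W` exceeds `t`. By the
Markov property `W_{k+m} = ∑_τ w_k(τ) W_m ∘ θ_{k,τ_k}`, and the restarted partition functions
`W_m ∘ θ_{k,y}` are independent of `F_k` and distributed as `W_m`. So the polymer mass `Z` of the
paths whose restarted partition function is at least `1/2` has mean at least `δ` on the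
first-passage event, hence `Z ≥ δ/2` on at least a `δ/2` fraction of it, and there
`W_n ≥ W_k Z / 2 > δ t / 4`. Summing over `k`, `P(max_{k ≤ n} W_k > t) ≤ (2/δ) P(W_n > δ t / 4)`,
and integrating in `t` bounds `E[max_{k ≤ n} W_k]` by `8/δ²` uniformly in `n`.
-/

open MeasureTheory ProbabilityTheory Filter Topology

noncomputable section

namespace DirectedPolymer

variable {Ω : Type*} [MeasurableSpace Ω]

/-- The nearest-neighbor step in `ℤ^d` in direction `e.1`, forward if `e.2 = true`,
backward otherwise. -/
def step (d : ℕ) (e : Fin d × Bool) : Fin d → ℤ :=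
  Pi.single e.1 (if e.2 then 1 else -1)

/-- The position, after `k` steps, of the nearest-neighbor path started at the origin whose
successive steps are encoded by `σ`. -/
def walkPos {d n : ℕ} (σ : Fin n → Fin d × Bool) (k : ℕ) : Fin d → ℤ :=
  ∑ j : Fin n, if (j : ℕ) < k then step d (σ j) else 0

/-- The logarithmic moment generating function `λ(β) = log E[exp (β ω(1,0))]`. -/
def logMGF {d : ℕ} (P : Measure Ω) (env : ℕ × (Fin d → ℤ) → Ω → ℝ) (β : ℝ) : ℝ :=
  Real.log (∫ x, Real.exp (β * env (1, 0) x) ∂P)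

/-- The renormalized partition function `W_n` of the directed polymer: the expectation, over the
simple random walk `(S_i)` on `ℤ^d` started at the origin (uniform choice among the `2d`
neighbors at each step), of `exp (β ∑_{i=1}^n ω(i, S_i) - n λ(β))`. -/
def W {d : ℕ} (P : Measure Ω) (env : ℕ × (Fin d → ℤ) → Ω → ℝ) (β : ℝ) (n : ℕ) (x : Ω) : ℝ :=
  (2 * d : ℝ)⁻¹ ^ n * ∑ σ : Fin n → Fin d × Bool,
    Real.exp (β * ∑ i : Fin n, env ((i : ℕ) + 1, walkPos σ ((i : ℕ) + 1)) x
      - n * logMGF P env β)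

/-- The environment `ω = env` is a family of i.i.d. random variables, indexed by space-time
`ℕ × ℤ^d`, having all exponential moments: `E[exp (b |ω(1,0)|)] < ∞` for all `b ≥ 0`. -/
structure IsIIDEnv {d : ℕ} (P : Measure Ω) (env : ℕ × (Fin d → ℤ) → Ω → ℝ) : Prop where
  meas : ∀ p, Measurable (env p)
  indep : iIndepFun env P
  ident : ∀ p, IdentDistrib (env p) (env (1, 0)) P P
  expMom : ∀ b : ℝ, 0 ≤ b → Integrable (fun x => Real.exp (b * |env (1, 0) x|)) P

/-- The filtration `F_n = σ(ω(i,x) : i ≤ n, x ∈ ℤ^d)` generated by the environment. -/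
def envFiltration {d : ℕ} (env : ℕ × (Fin d → ℤ) → Ω → ℝ)
    (hmeas : ∀ p, Measurable (env p)) :
    Filtration ℕ (inferInstance : MeasurableSpace Ω) where
  seq n := ⨆ p ∈ {p : ℕ × (Fin d → ℤ) | p.1 ≤ n}, MeasurableSpace.comap (env p) inferInstance
  mono' := by
    intro i j hij
    exact iSup₂_le fun p hp => le_iSup₂_of_le p (le_trans hp hij) le_rfl
  le' n := iSup₂_le fun p _ => (hmeas p).comap_le


/-- The polymer measure of the event `{S_n = y}`, multiplied by `W_n`:
`W_n · μ_{n,β}(S_n = y)`. -/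
def polymerMass {d : ℕ} (P : Measure Ω) (env : ℕ × (Fin d → ℤ) → Ω → ℝ) (β : ℝ) (n : ℕ)
    (y : Fin d → ℤ) (x : Ω) : ℝ :=
  (2 * d : ℝ)⁻¹ ^ n * ∑ σ : Fin n → Fin d × Bool,
    if walkPos σ n = y then
      Real.exp (β * ∑ i : Fin n, env ((i : ℕ) + 1, walkPos σ ((i : ℕ) + 1)) x
        - n * logMGF P env β)
    else 0

/-- The space-time shift `θ_{n,y}` of the environment: `(θ_{n,y} ω)(·,·) = ω(n + ·, y + ·)`. -/
def shiftEnv {d : ℕ} (n : ℕ) (y : Fin d → ℤ) (env : ℕ × (Fin d → ℤ) → Ω → ℝ) :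
    ℕ × (Fin d → ℤ) → Ω → ℝ :=
  fun p => env (n + p.1, y + p.2)

/-- The hitting time `inf {n ≥ 0 : t < g n x}` of `(t, ∞)`, with value `⊤ = ∞` if the
process never exceeds `t`. -/
def hitAbove (g : ℕ → Ω → ℝ) (t : ℝ) (x : Ω) : ℕ∞ :=
  sInf {m : ℕ∞ | ∃ k : ℕ, m = (k : ℕ∞) ∧ t < g k x}

/-- The hitting time `inf {n ≥ 0 : g n x ≤ s}` of `(-∞, s]`, with value `⊤ = ∞` if the
process never goes below `s`. -/
def hitBelow (g : ℕ → Ω → ℝ) (s : ℝ) (x : Ω) : ℕ∞ :=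
  sInf {m : ℕ∞ | ∃ k : ℕ, m = (k : ℕ∞) ∧ g k x ≤ s}

variable (P : Measure Ω) [IsProbabilityMeasure P]

end DirectedPolymer

namespace MeasureTheory

open scoped ENNReal

variable {Ω : Type*}

lemma measurable_iSup_comap {ι β : Type*} [MeasurableSpace β] {X : ι → Ω → β} {S : Set ι} {i : ι}
    (hi : i ∈ S) : Measurable[⨆ j ∈ S, MeasurableSpace.comap (X j) inferInstance] (X i) :=
  (comap_measurable (X i)).mono (le_iSup₂ (f := fun j _ => MeasurableSpace.comap (X j) _) i hi)
    le_rfl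

def firstPassage (f : ℕ → Ω → ℝ) (t : ℝ) (k : ℕ) : Set Ω :=
  {x | t < f k x ∧ ∀ j < k, f j x ≤ t}

lemma pairwise_disjoint_firstPassage (f : ℕ → Ω → ℝ) (t : ℝ) :
    Pairwise (Function.onFun Disjoint (firstPassage f t)) :=
  (pairwise_disjoint_on _).2 fun i _ hij =>
    Set.disjoint_left.2 fun _ hi hj => (hj.2 i hij).not_gt hi.1

lemma measurableSet_firstPassage {m : MeasurableSpace Ω} {f : ℕ → Ω → ℝ} (t : ℝ) {k : ℕ}
    (hf : ∀ j ≤ k, Measurable[m] (f j)) : MeasurableSet[m] (firstPassage f t k) := by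
  have : firstPassage f t k = {x | t < f k x} ∩ ⋂ j ∈ Finset.range k, {x | f j x ≤ t} := by
    ext x
    simp [firstPassage]
  rw [this]
  refine (measurableSet_lt measurable_const (hf k le_rfl)).inter <|
    .biInter (Finset.range k).countable_toSet fun j hj =>
      measurableSet_le (hf j ?_) measurable_const
  exact (Finset.mem_range.1 hj).le

lemma setOf_lt_sup'_eq_biUnion_firstPassage (f : ℕ → Ω → ℝ) (t : ℝ) (n : ℕ) :
    {x | t < (Finset.range (n + 1)).sup' Finset.nonempty_range_add_one fun k => f k x} =
      ⋃ k ∈ Finset.range (n + 1), firstPassage f t k := by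
  ext x
  simp only [Set.mem_ofPred_eq, Finset.lt_sup'_iff, Set.mem_iUnion, exists_prop]
  constructor
  · rintro ⟨k, hk, hlt⟩
    have hex : ∃ j, t < f j x := ⟨k, hlt⟩
    refine ⟨Nat.find hex, ?_, Nat.find_spec hex, fun j hj => not_lt.1 (Nat.find_min hex hj)⟩
    exact Finset.mem_range.2 ((Nat.find_min' hex hlt).trans_lt (Finset.mem_range.1 hk))
  · rintro ⟨k, hk, hlt, -⟩
    exact ⟨k, hk, hlt⟩

variable [MeasurableSpace Ω] {μ : Measure Ω}

lemma lintegral_iSup_ofReal_eq_iSup_lintegral_sup' {f : ℕ → Ω → ℝ}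
    (hf : ∀ n, Measurable (f n)) :
    ∫⁻ x, ⨆ n, ENNReal.ofReal (f n x) ∂μ =
      ⨆ n, ∫⁻ x, ENNReal.ofReal ((Finset.range (n + 1)).sup' Finset.nonempty_range_add_one
        fun k => f k x) ∂μ := by
  rw [← lintegral_iSup (fun n => (Finset.measurable_range_sup'' fun k _ => hf k).ennreal_ofReal)
    fun m n hmn x => ENNReal.ofReal_le_ofReal <| Finset.sup'_mono _
      (Finset.range_subset_range.2 (by omega)) _]
  refine lintegral_congr fun x => le_antisymm (iSup_mono fun n => ENNReal.ofReal_le_ofReal <|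
    Finset.le_sup' (fun k => f k x) (Finset.self_mem_range_succ n)) (iSup_le fun n => ?_)
  obtain ⟨k, -, hk⟩ := Finset.exists_mem_eq_sup' Finset.nonempty_range_add_one fun k => f k x
  exact hk ▸ le_iSup (fun n => ENNReal.ofReal (f n x)) k

lemma mul_lintegral_le_of_mul_measure_lt_le {f g : Ω → ℝ} (hf0 : 0 ≤ f) (hg0 : 0 ≤ g)
    (hf : Measurable f) (hg : Measurable g) {a : ℝ} (ha : 0 < a) {C : ℝ≥0∞}
    (h : ∀ t, C * μ {x | t < g x} ≤ μ {x | a * t < f x}) :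
    C * ∫⁻ x, ENNReal.ofReal (g x) ∂μ ≤ ENNReal.ofReal a⁻¹ * ∫⁻ x, ENNReal.ofReal (f x) ∂μ := by
  have hfa : ∀ t, {x | a * t < f x} = {x | t < f x / a} := fun t => by
    ext x
    simp only [Set.mem_ofPred_eq, lt_div_iff₀ ha, mul_comm]
  calc C * ∫⁻ x, ENNReal.ofReal (g x) ∂μ
      = C * ∫⁻ t in Set.Ioi 0, μ {x | t < g x} := by
        rw [lintegral_eq_lintegral_meas_lt μ (ae_of_all _ hg0) hg.aemeasurable]
    _ ≤ ∫⁻ t in Set.Ioi 0, C * μ {x | t < g x} := lintegral_const_mul_le _ _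
    _ ≤ ∫⁻ t in Set.Ioi 0, μ {x | t < f x / a} := lintegral_mono fun t => hfa t ▸ h t
    _ = ∫⁻ x, ENNReal.ofReal (a⁻¹ * f x) ∂μ := by
        simp only [← div_eq_inv_mul]
        rw [lintegral_eq_lintegral_meas_lt μ (ae_of_all _ fun x => div_nonneg (hf0 x) ha.le)
          (hf.div_const a).aemeasurable]
    _ = ENNReal.ofReal a⁻¹ * ∫⁻ x, ENNReal.ofReal (f x) ∂μ := by
        simp only [ENNReal.ofReal_mul (inv_nonneg.2 ha.le)]
        exact lintegral_const_mul' _ _ ENNReal.ofReal_ne_top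

lemma UnifIntegrable.exists_pos_forall_ofReal_le_measure [IsProbabilityMeasure μ] {ι : Type*}
    {f : ι → Ω → ℝ} (hUI : UnifIntegrable f 1 μ) (hf : ∀ i, Measurable (f i))
    (hf0 : ∀ i x, 0 ≤ f i x) (hf1 : ∀ i, ∫⁻ x, ENNReal.ofReal (f i x) ∂μ = 1) :
    ∃ δ : ℝ, 0 < δ ∧ ∀ i, ENNReal.ofReal δ ≤ μ {x | 2⁻¹ ≤ f i x} := by
  obtain ⟨δ, hδ, hsmall⟩ := hUI (by norm_num : (0 : ℝ) < 4⁻¹)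
  refine ⟨δ, hδ, fun i => le_of_not_gt fun hlt => ?_⟩
  set A := {x | 2⁻¹ ≤ f i x}
  have hA : MeasurableSet A := measurableSet_le measurable_const (hf i)
  have hin : ∫⁻ x in A, ENNReal.ofReal (f i x) ∂μ ≤ ENNReal.ofReal 4⁻¹ := by
    have := hsmall i A hA hlt.le
    simp_rw [eLpNorm_one_eq_lintegral_enorm, enorm_indicator_eq_indicator_enorm,
      Real.enorm_eq_ofReal (hf0 i _)] at this
    rwa [lintegral_indicator hA] at this
  have hout : ∫⁻ x in Aᶜ, ENNReal.ofReal (f i x) ∂μ ≤ ENNReal.ofReal 2⁻¹ :=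
    calc ∫⁻ x in Aᶜ, ENNReal.ofReal (f i x) ∂μ ≤ ∫⁻ _ in Aᶜ, ENNReal.ofReal 2⁻¹ ∂μ :=
          setLIntegral_mono' hA.compl fun x hx =>
            ENNReal.ofReal_le_ofReal (not_le.1 (show ¬ 2⁻¹ ≤ f i x from hx)).le
      _ = ENNReal.ofReal 2⁻¹ * μ Aᶜ := setLIntegral_const _ _
      _ ≤ ENNReal.ofReal 2⁻¹ := mul_le_of_le_one_right' prob_le_one
  have := (hf1 i).symm.trans_le ((lintegral_add_compl _ hA).symm.trans_le (add_le_add hin hout))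
  rw [← ENNReal.ofReal_add (by norm_num) (by norm_num), ENNReal.one_le_ofReal] at this
  norm_num at this

/-- A Paley–Zygmund type inequality. -/
lemma ofReal_half_mul_le_measure_inter_of_le_setLIntegral [IsFiniteMeasure μ] {A : Set Ω}
    {Z : Ω → ℝ} (hZ : Measurable Z) (hZ1 : ∀ x ∈ A, Z x ≤ 1) {δ : ℝ}
    (h : ENNReal.ofReal δ * μ A ≤ ∫⁻ x in A, ENNReal.ofReal (Z x) ∂μ) :
    ENNReal.ofReal (δ / 2) * μ A ≤ μ (A ∩ {x | δ / 2 ≤ Z x}) := by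
  rcases le_or_gt δ 0 with hδ | hδ
  · simp [ENNReal.ofReal_of_nonpos (by linarith : δ / 2 ≤ 0)]
  set G := {x | δ / 2 ≤ Z x}
  have hG : MeasurableSet G := measurableSet_le measurable_const hZ
  have hpt : ∀ x ∈ A, ENNReal.ofReal (Z x) ≤ ENNReal.ofReal (δ / 2) + G.indicator 1 x := by
    intro x hx
    by_cases hxG : x ∈ G
    · rw [Set.indicator_of_mem hxG, Pi.one_apply]
      exact (ENNReal.ofReal_le_one.2 (hZ1 x hx)).trans le_add_self
    · rw [Set.indicator_of_notMem hxG, add_zero]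
      exact ENNReal.ofReal_le_ofReal (not_le.1 hxG).le
  have hupper : ∫⁻ x in A, ENNReal.ofReal (Z x) ∂μ ≤ ENNReal.ofReal (δ / 2) * μ A + μ (A ∩ G) :=
    calc ∫⁻ x in A, ENNReal.ofReal (Z x) ∂μ
        ≤ ∫⁻ x in A, (ENNReal.ofReal (δ / 2) + G.indicator 1 x) ∂μ :=
          setLIntegral_mono ((measurable_one.indicator hG).const_add _) hpt
      _ = ENNReal.ofReal (δ / 2) * μ A + μ (A ∩ G) := by
          rw [lintegral_add_left measurable_const, setLIntegral_const, lintegral_indicator_one hG,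
            Measure.restrict_apply hG, Set.inter_comm]
  have hsplit : ENNReal.ofReal δ * μ A =
      ENNReal.ofReal (δ / 2) * μ A + ENNReal.ofReal (δ / 2) * μ A := by
    rw [← add_mul, ← ENNReal.ofReal_add (by linarith) (by linarith), add_halves]
  exact (ENNReal.add_le_add_iff_left (ENNReal.mul_ne_top ENNReal.ofReal_ne_top
    (measure_ne_top μ A))).1 (hsplit ▸ h.trans hupper)

end MeasureTheory

namespace ProbabilityTheory

lemma iIndepFun.identDistrib_precomp {Ω ι β : Type*} [MeasurableSpace Ω] [MeasurableSpace β]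
    {μ : Measure Ω} {X : ι → Ω → β} (h : iIndepFun X μ) (hX : ∀ i, Measurable (X i)) {i₀ : ι}
    (hid : ∀ i, IdentDistrib (X i) (X i₀) μ μ) {e : ι → ι} (he : e.Injective) :
    IdentDistrib (fun ω i => X (e i) ω) (fun ω i => X i ω) μ μ := by
  have := h.isProbabilityMeasure
  have hmap : ∀ i, μ.map (X i) = μ.map (X i₀) := fun i => (hid i).map_eq
  refine ⟨(measurable_pi_lambda _ fun i => hX (e i)).aemeasurable,
    (measurable_pi_lambda _ hX).aemeasurable, ?_⟩
  rw [(h.precomp he).map_fun_eq_infinitePi_map (fun i => hX (e i)),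
    h.map_fun_eq_infinitePi_map hX]
  simp only [hmap]

variable {Ω ι : Type*} {m₁ m₂ : MeasurableSpace Ω} [mΩ : MeasurableSpace Ω] {μ : Measure Ω}

lemma Indep.ofReal_mul_measure_le_setLIntegral_sum_mul_indicator [Fintype ι]
    (hind : Indep m₁ m₂ μ) (h₁ : m₁ ≤ mΩ) (h₂ : m₂ ≤ mΩ) {A : Set Ω} (hA : MeasurableSet[m₁] A)
    {q : ι → Ω → ℝ} (hq : ∀ i, Measurable[m₁] (q i)) (hq0 : ∀ i x, 0 ≤ q i x)
    (hq1 : ∀ x ∈ A, ∑ i, q i x = 1) {B : ι → Set Ω} (hB : ∀ i, MeasurableSet[m₂] (B i))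
    {δ : ℝ} (hδ : ∀ i, ENNReal.ofReal δ ≤ μ (B i)) :
    ENNReal.ofReal δ * μ A ≤ ∫⁻ x in A, ENNReal.ofReal (∑ i, q i x * (B i).indicator 1 x) ∂μ := by
  have hA' : MeasurableSet A := h₁ _ hA
  have hpt : ∀ x, A.indicator (fun x => ENNReal.ofReal (∑ i, q i x * (B i).indicator 1 x)) x =
      ∑ i, A.indicator (fun x => ENNReal.ofReal (q i x)) x * (B i).indicator 1 x := by
    intro x
    by_cases hx : x ∈ A
    · simp only [Set.indicator_of_mem hx]
      rw [ENNReal.ofReal_sum_of_nonneg (f := fun i => q i x * (B i).indicator 1 x) fun i _ =>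
        mul_nonneg (hq0 i x) (Set.indicator_nonneg (fun _ _ => zero_le_one) x)]
      refine Finset.sum_congr rfl fun i _ => ?_
      by_cases hxB : x ∈ B i <;> simp [hxB]
    · simp [hx]
  calc ENNReal.ofReal δ * μ A
      = ENNReal.ofReal δ * ∫⁻ x in A, ∑ i, ENNReal.ofReal (q i x) ∂μ := by
        rw [setLIntegral_congr_fun hA' fun x hx => by
          rw [← ENNReal.ofReal_sum_of_nonneg fun i _ => hq0 i x, hq1 x hx, ENNReal.ofReal_one],
          setLIntegral_const, one_mul]
    _ = ∑ i, (∫⁻ x in A, ENNReal.ofReal (q i x) ∂μ) * ENNReal.ofReal δ := by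
        rw [lintegral_finsetSum _ fun i _ => ((hq i).mono h₁ le_rfl).ennreal_ofReal,
          Finset.mul_sum]
        simp only [mul_comm]
    _ ≤ ∑ i, (∫⁻ x in A, ENNReal.ofReal (q i x) ∂μ) * μ (B i) := by
        gcongr with i
        exact hδ i
    _ = ∑ i, ∫⁻ x, A.indicator (fun x => ENNReal.ofReal (q i x)) x * (B i).indicator 1 x ∂μ := by
        refine Finset.sum_congr rfl fun i _ => Eq.symm ?_
        refine (lintegral_mul_eq_lintegral_mul_lintegral_of_independent_measurableSpace h₁ h₂ hind
          ((hq i).ennreal_ofReal.indicator hA) (Measurable.indicator (m := m₂)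
            (f := fun _ => (1 : ENNReal)) measurable_const (hB i))).trans ?_
        rw [lintegral_indicator hA', lintegral_indicator_const (h₂ _ (hB i)), one_mul]
    _ = ∫⁻ x in A, ENNReal.ofReal (∑ i, q i x * (B i).indicator 1 x) ∂μ := by
        rw [← lintegral_indicator hA', lintegral_congr hpt]
        exact (lintegral_finsetSum _ fun i _ =>
          (((hq i).mono h₁ le_rfl).ennreal_ofReal.indicator hA').fun_mul
            (measurable_one.indicator (h₂ _ (hB i)))).symm

end ProbabilityTheory

namespace DirectedPolymer

section

variable {d : ℕ}

def energy {n : ℕ} (σ : Fin n → Fin d × Bool) (f : ℕ × (Fin d → ℤ) → ℝ) : ℝ :=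
  ∑ i : Fin n, f ((i : ℕ) + 1, walkPos σ ((i : ℕ) + 1))

def pathWeight (β lam : ℝ) {n : ℕ} (σ : Fin n → Fin d × Bool) (f : ℕ × (Fin d → ℤ) → ℝ) : ℝ :=
  (2 * d : ℝ)⁻¹ ^ n * Real.exp (β * energy σ f - n * lam)

/-- `W` as a function of one realization `f` of the environment (see `W_eq_partitionFn`), so that
the law of `W` under a space-time shift is the image of the law of the shifted field. -/
def partitionFn (d : ℕ) (β lam : ℝ) (n : ℕ) (f : ℕ × (Fin d → ℤ) → ℝ) : ℝ :=
  ∑ σ : Fin n → Fin d × Bool, pathWeight β lam σ f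

lemma pathWeight_nonneg (β lam : ℝ) {n : ℕ} (σ : Fin n → Fin d × Bool)
    (f : ℕ × (Fin d → ℤ) → ℝ) : 0 ≤ pathWeight β lam σ f := by
  unfold pathWeight
  positivity

lemma pathWeight_eq_prod (β lam : ℝ) {n : ℕ} (σ : Fin n → Fin d × Bool)
    (f : ℕ × (Fin d → ℤ) → ℝ) :
    pathWeight β lam σ f = (2 * d : ℝ)⁻¹ ^ n *
      ∏ i : Fin n, Real.exp (β * f ((i : ℕ) + 1, walkPos σ ((i : ℕ) + 1)) - lam) := by
  rw [pathWeight, energy, ← Real.exp_sum, Finset.sum_sub_distrib, Finset.mul_sum]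
  simp

lemma walkPos_append_of_le {k m c : ℕ} (τ : Fin k → Fin d × Bool) (ρ : Fin m → Fin d × Bool)
    (hc : c ≤ k) : walkPos (Fin.append τ ρ) c = walkPos τ c := by
  have hρ : ∀ j : Fin m, ¬ k + (j : ℕ) < c := fun j => by omega
  simp [walkPos, Fin.sum_univ_add, hρ]

lemma walkPos_append_add {k m : ℕ} (τ : Fin k → Fin d × Bool) (ρ : Fin m → Fin d × Bool)
    (c : ℕ) : walkPos (Fin.append τ ρ) (k + c) = walkPos τ k + walkPos ρ c := by
  simp only [walkPos, Fin.sum_univ_add, Fin.append_left, Fin.append_right, Fin.val_castAdd,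
    Fin.val_natAdd, Nat.add_lt_add_iff_left]
  congr 1
  exact Finset.sum_congr rfl fun j _ => by
    simp only [j.isLt, if_true, show (j : ℕ) < k + c by omega]

lemma energy_append {k m : ℕ} (τ : Fin k → Fin d × Bool) (ρ : Fin m → Fin d × Bool)
    (f : ℕ × (Fin d → ℤ) → ℝ) :
    energy (Fin.append τ ρ) f =
      energy τ f + energy ρ (fun p => f (k + p.1, walkPos τ k + p.2)) := by
  simp only [energy, Fin.sum_univ_add, Fin.val_castAdd, Fin.val_natAdd]
  congr 1
  · exact Finset.sum_congr rfl fun i _ => by rw [walkPos_append_of_le τ ρ (by omega)]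
  · exact Finset.sum_congr rfl fun i _ => by rw [Nat.add_assoc, walkPos_append_add]

lemma pathWeight_append (β lam : ℝ) {k m : ℕ} (τ : Fin k → Fin d × Bool)
    (ρ : Fin m → Fin d × Bool) (f : ℕ × (Fin d → ℤ) → ℝ) :
    pathWeight β lam (Fin.append τ ρ) f =
      pathWeight β lam τ f * pathWeight β lam ρ (fun p => f (k + p.1, walkPos τ k + p.2)) := by
  simp only [pathWeight, energy_append, pow_add, ← mul_mul_mul_comm, ← Real.exp_add]
  congr 2
  push_cast
  ring

lemma partitionFn_add (β lam : ℝ) (k m : ℕ) (f : ℕ × (Fin d → ℤ) → ℝ) :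
    partitionFn d β lam (k + m) f = ∑ τ : Fin k → Fin d × Bool,
      pathWeight β lam τ f * partitionFn d β lam m (fun p => f (k + p.1, walkPos τ k + p.2)) := by
  rw [partitionFn, ← (Fin.appendEquiv k m).sum_comp, Fintype.sum_prod_type]
  simp only [Fin.appendEquiv, Equiv.coe_fn_mk, pathWeight_append, partitionFn, Finset.mul_sum]

variable {Ω : Type*} {m : MeasurableSpace Ω} {env : ℕ × (Fin d → ℤ) → Ω → ℝ}

lemma measurable_pathWeight (β lam : ℝ) {n : ℕ} (σ : Fin n → Fin d × Bool)
    (h : ∀ i < n, ∀ y, Measurable[m] (env (i + 1, y))) :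
    Measurable[m] (fun x => pathWeight β lam σ (fun p => env p x)) := by
  unfold pathWeight energy
  have := fun i : Fin n => h i i.isLt (walkPos σ ((i : ℕ) + 1))
  fun_prop

lemma measurable_partitionFn (β lam : ℝ) {n : ℕ}
    (h : ∀ i < n, ∀ y, Measurable[m] (env (i + 1, y))) :
    Measurable[m] (fun x => partitionFn d β lam n (fun p => env p x)) := by
  unfold partitionFn
  have := fun σ : Fin n → Fin d × Bool => measurable_pathWeight β lam σ h
  fun_prop

end

section

variable {d : ℕ} {Ω : Type*} [MeasurableSpace Ω]

lemma W_eq_partitionFn (P : Measure Ω) (env : ℕ × (Fin d → ℤ) → Ω → ℝ) (β : ℝ) (n : ℕ) :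
    W P env β n = fun x => partitionFn d β (logMGF P env β) n (fun p => env p x) := by
  ext x
  simp only [W, partitionFn, pathWeight, energy, Finset.mul_sum]

lemma W_nonneg (P : Measure Ω) (env : ℕ × (Fin d → ℤ) → Ω → ℝ) (β : ℝ) (n : ℕ) (x : Ω) :
    0 ≤ W P env β n x := by
  rw [W_eq_partitionFn]
  exact Finset.sum_nonneg fun σ _ => pathWeight_nonneg β _ σ _

lemma W_pos (P : Measure Ω) (env : ℕ × (Fin d → ℤ) → Ω → ℝ) (hd : 0 < d) (β : ℝ) (n : ℕ)
    (x : Ω) : 0 < W P env β n x := by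
  have : Nonempty (Fin d) := ⟨⟨0, hd⟩⟩
  rw [W_eq_partitionFn]
  exact Finset.sum_pos (fun σ _ => mul_pos (by positivity) (Real.exp_pos _)) Finset.univ_nonempty

lemma W_le_one_of_dim_zero (P : Measure Ω) (env : ℕ × (Fin 0 → ℤ) → Ω → ℝ) (β : ℝ) (n : ℕ)
    (x : Ω) : W P env β n x ≤ 1 := by
  cases n <;> simp [W]

/-- Under the polymer measure of length `k`, the mass of the paths `τ` from whose endpoint the
partition function of the environment shifted by `θ_{k, τ_k}` is at least `c` after `m` steps. -/
def survivalFraction (P : Measure Ω) (env : ℕ × (Fin d → ℤ) → Ω → ℝ) (β c : ℝ) (k m : ℕ)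
    (x : Ω) : ℝ :=
  ∑ τ : Fin k → Fin d × Bool, pathWeight β (logMGF P env β) τ (fun p => env p x) / W P env β k x *
    {x | c ≤ W P (shiftEnv k (walkPos τ k) env) β m x}.indicator 1 x

abbrev envAfter (env : ℕ × (Fin d → ℤ) → Ω → ℝ) (k : ℕ) : MeasurableSpace Ω :=
  ⨆ p ∈ {p : ℕ × (Fin d → ℤ) | k < p.1}, MeasurableSpace.comap (env p) inferInstance

variable {P : Measure Ω} {env : ℕ × (Fin d → ℤ) → Ω → ℝ}

lemma measurable_W (hmeas : ∀ p, Measurable (env p)) (β : ℝ) (n : ℕ) :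
    Measurable (W P env β n) := by
  rw [W_eq_partitionFn]
  exact measurable_partitionFn β _ fun i _ y => hmeas (i + 1, y)

lemma measurable_W_envFiltration (hmeas : ∀ p, Measurable (env p)) (β : ℝ) {j k : ℕ}
    (hjk : j ≤ k) : Measurable[envFiltration env hmeas k] (W P env β j) := by
  rw [W_eq_partitionFn]
  exact measurable_partitionFn β _ fun i hi y =>
    measurable_iSup_comap (S := {p | p.1 ≤ k}) (i := (i + 1, y)) (show i + 1 ≤ k by omega)

lemma measurable_pathWeight_envFiltration (hmeas : ∀ p, Measurable (env p)) (β lam : ℝ) {k : ℕ}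
    (τ : Fin k → Fin d × Bool) :
    Measurable[envFiltration env hmeas k] (fun x => pathWeight β lam τ (fun p => env p x)) :=
  measurable_pathWeight β lam τ fun i hi y =>
    measurable_iSup_comap (S := {p | p.1 ≤ k}) (i := (i + 1, y)) (show i + 1 ≤ k by omega)

lemma measurable_W_shiftEnv_envAfter (β : ℝ) (k m : ℕ) (y : Fin d → ℤ) :
    Measurable[envAfter env k] (W P (shiftEnv k y env) β m) := by
  rw [W_eq_partitionFn]
  exact measurable_partitionFn β _ fun i _ z => measurable_iSup_comap (S := {p | k < p.1})
    (i := (k + (i + 1), y + z)) (show k < k + (i + 1) by omega)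

lemma measurable_survivalFraction (hmeas : ∀ p, Measurable (env p)) (β c : ℝ) (k m : ℕ) :
    Measurable (survivalFraction P env β c k m) :=
  Finset.measurable_sum _ fun τ _ =>
    ((measurable_pathWeight β _ τ fun i _ y => hmeas (i + 1, y)).div (measurable_W hmeas β k)).mul
      (measurable_one.indicator (measurable_W (fun _ => hmeas _) β m measurableSet_Ici))

lemma indep_envFiltration_envAfter (henv : IsIIDEnv P env) (k : ℕ) :
    Indep (envFiltration env henv.meas k) (envAfter env k) P :=
  indep_iSup_of_disjoint (fun p => (henv.meas p).comap_le)
    ((iIndepFun_iff_iIndep _ _ _).1 henv.indep)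
    (Set.disjoint_left.2 fun p (h₁ : p.1 ≤ k) (h₂ : k < p.1) => not_le.2 h₂ h₁)

lemma logMGF_shiftEnv (henv : IsIIDEnv P env) (β : ℝ) (k : ℕ) (y : Fin d → ℤ) :
    logMGF P (shiftEnv k y env) β = logMGF P env β := by
  unfold logMGF
  congr 1
  exact ((henv.ident (k + 1, y + 0)).comp
    (Real.measurable_exp.comp (measurable_const_mul β))).integral_eq

lemma W_add (henv : IsIIDEnv P env) (β : ℝ) (k m : ℕ) (x : Ω) :
    W P env β (k + m) x = ∑ τ : Fin k → Fin d × Bool,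
      pathWeight β (logMGF P env β) τ (fun p => env p x) *
        W P (shiftEnv k (walkPos τ k) env) β m x := by
  simp only [W_eq_partitionFn, logMGF_shiftEnv henv]
  exact partitionFn_add β _ k m _

lemma identDistrib_W_shiftEnv (henv : IsIIDEnv P env) (β : ℝ) (k m : ℕ) (y : Fin d → ℤ) :
    IdentDistrib (W P (shiftEnv k y env) β m) (W P env β m) P P := by
  have he : Function.Injective fun p : ℕ × (Fin d → ℤ) => (k + p.1, y + p.2) :=
    fun p q h => by simpa [Prod.ext_iff] using h
  rw [W_eq_partitionFn, W_eq_partitionFn, logMGF_shiftEnv henv]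
  exact (henv.indep.identDistrib_precomp henv.meas henv.ident he).comp
    (measurable_partitionFn (env := fun p f => f p) β _ fun _ _ _ => measurable_pi_apply _)

lemma integrable_exp_mul_env (henv : IsIIDEnv P env) (β : ℝ) :
    Integrable (fun x => Real.exp (β * env (1, 0) x)) P := by
  have hm := henv.meas (1, 0)
  refine (henv.expMom |β| (abs_nonneg β)).mono' (by fun_prop) ?_
  filter_upwards with x
  rw [Real.norm_of_nonneg (Real.exp_nonneg _), Real.exp_le_exp, ← abs_mul]
  exact le_abs_self _

lemma lintegral_exp_sub_logMGF [IsProbabilityMeasure P] (henv : IsIIDEnv P env) (β : ℝ)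
    (p : ℕ × (Fin d → ℤ)) :
    ∫⁻ x, ENNReal.ofReal (Real.exp (β * env p x - logMGF P env β)) ∂P = 1 := by
  have hpos := integral_exp_pos (integrable_exp_mul_env henv β)
  have hu : Measurable fun r => ENNReal.ofReal (Real.exp (β * r - logMGF P env β)) := by fun_prop
  refine ((henv.ident p).comp hu).lintegral_eq.trans ?_
  simp only [Function.comp_def]
  rw [← ofReal_integral_eq_lintegral_ofReal _ (ae_of_all _ fun _ => Real.exp_nonneg _)]
  · simp only [Real.exp_sub, integral_div, logMGF, Real.exp_log hpos, div_self hpos.ne',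
      ENNReal.ofReal_one]
  · simpa only [Real.exp_sub] using (integrable_exp_mul_env henv β).div_const _

lemma lintegral_pathWeight [IsProbabilityMeasure P] (henv : IsIIDEnv P env) (β : ℝ) {n : ℕ}
    (σ : Fin n → Fin d × Bool) :
    ∫⁻ x, ENNReal.ofReal (pathWeight β (logMGF P env β) σ (fun p => env p x)) ∂P =
      ENNReal.ofReal ((2 * d : ℝ)⁻¹ ^ n) := by
  set g := fun r => ENNReal.ofReal (Real.exp (β * r - logMGF P env β))
  have hg : Measurable g := by fun_prop
  have hinj : Function.Injective fun i : Fin n => ((i : ℕ) + 1, walkPos σ ((i : ℕ) + 1)) :=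
    fun i j h => Fin.ext (by simpa using congrArg Prod.fst h)
  have hprod := lintegral_prod_eq_prod_lintegral_of_indepFun Finset.univ _
    ((henv.indep.comp (fun _ => g) fun _ => hg).precomp hinj) fun i => hg.comp (henv.meas _)
  simp only [Function.comp_def] at hprod
  have hm : ∀ i : Fin n, Measurable (env ((i : ℕ) + 1, walkPos σ ((i : ℕ) + 1))) :=
    fun i => henv.meas _
  simp only [pathWeight_eq_prod, ENNReal.ofReal_mul (by positivity : (0 : ℝ) ≤ (2 * d : ℝ)⁻¹ ^ n),
    ENNReal.ofReal_prod_of_nonneg fun _ _ => Real.exp_nonneg _]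
  rw [lintegral_const_mul _ (by fun_prop), hprod]
  simp [g, lintegral_exp_sub_logMGF henv]

lemma lintegral_W [IsProbabilityMeasure P] (henv : IsIIDEnv P env) (hd : 0 < d) (β : ℝ)
    (n : ℕ) : ∫⁻ x, ENNReal.ofReal (W P env β n x) ∂P = 1 := by
  simp only [W_eq_partitionFn, partitionFn]
  rw [lintegral_congr fun x => ENNReal.ofReal_sum_of_nonneg fun σ _ => pathWeight_nonneg β _ σ _,
    lintegral_finsetSum _ fun σ _ => (measurable_pathWeight β _ σ
      fun i _ y => henv.meas (i + 1, y)).ennreal_ofReal]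
  simp only [lintegral_pathWeight henv, Finset.sum_const, Finset.card_univ, Fintype.card_fun,
    Fintype.card_prod, Fintype.card_fin, Fintype.card_bool, nsmul_eq_mul]
  rw [← ENNReal.ofReal_natCast, ← ENNReal.ofReal_mul (by positivity)]
  push_cast
  rw [← mul_pow, mul_comm (d : ℝ) 2, mul_inv_cancel₀ (by positivity), one_pow, ENNReal.ofReal_one]

lemma sum_pathWeight_div_W (hd : 0 < d) (β : ℝ) (k : ℕ) (x : Ω) :
    ∑ τ : Fin k → Fin d × Bool,
      pathWeight β (logMGF P env β) τ (fun p => env p x) / W P env β k x = 1 := by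
  rw [← Finset.sum_div, div_eq_one_iff_eq (W_pos P env hd β k x).ne', W_eq_partitionFn]
  rfl

lemma survivalFraction_le_one (hd : 0 < d) (β c : ℝ) (k m : ℕ) (x : Ω) :
    survivalFraction P env β c k m x ≤ 1 := by
  unfold survivalFraction
  refine (Finset.sum_le_sum fun τ _ => ?_).trans_eq
    (sum_pathWeight_div_W (P := P) (env := env) hd β k x)
  refine mul_le_of_le_one_right (div_nonneg (pathWeight_nonneg β _ τ _) (W_nonneg P env β k x)) ?_
  exact Set.indicator_le_self' (fun _ _ => zero_le_one) x

lemma mul_W_mul_survivalFraction_le (henv : IsIIDEnv P env) (hd : 0 < d) (β c : ℝ) (k m : ℕ)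
    (x : Ω) : c * (W P env β k x * survivalFraction P env β c k m x) ≤ W P env β (k + m) x := by
  rw [survivalFraction, Finset.mul_sum, Finset.mul_sum, W_add henv]
  refine Finset.sum_le_sum fun τ _ => ?_
  rw [← mul_assoc (W P env β k x), mul_div_cancel₀ _ (W_pos P env hd β k x).ne', mul_left_comm]
  refine mul_le_mul_of_nonneg_left ?_ (pathWeight_nonneg β _ τ _)
  by_cases hx : c ≤ W P (shiftEnv k (walkPos τ k) env) β m x
  · simpa [Set.indicator_of_mem (show x ∈ {x | c ≤ _} from hx)] using hx
  · simpa [Set.indicator_of_notMem (show x ∉ {x | c ≤ _} from hx)] using W_nonneg P _ β m x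

variable [IsProbabilityMeasure P] {c δ : ℝ}

lemma ofReal_half_mul_measure_firstPassage_le (henv : IsIIDEnv P env) (hd : 0 < d) (β : ℝ)
    (hc : 0 < c) (hδ : 0 < δ) (hlow : ∀ m, ENNReal.ofReal δ ≤ P {x | c ≤ W P env β m x})
    (t : ℝ) (k m : ℕ) :
    ENNReal.ofReal (δ / 2) * P (firstPassage (W P env β) t k) ≤
      P (firstPassage (W P env β) t k ∩ {x | c * (δ / 2) * t < W P env β (k + m) x}) := by
  have hE : MeasurableSet[envFiltration env henv.meas k] (firstPassage (W P env β) t k) :=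
    measurableSet_firstPassage t fun j hj => measurable_W_envFiltration henv.meas β hj
  have hmean := Indep.ofReal_mul_measure_le_setLIntegral_sum_mul_indicator
    (indep_envFiltration_envAfter henv k) ((envFiltration env henv.meas).le k)
    (iSup₂_le fun p _ => (henv.meas p).comap_le) hE
    (q := fun τ x => pathWeight β (logMGF P env β) τ (fun p => env p x) / W P env β k x)
    (fun τ => (measurable_pathWeight_envFiltration henv.meas β _ τ).div
      (measurable_W_envFiltration henv.meas β le_rfl))
    (fun τ x => div_nonneg (pathWeight_nonneg β _ τ _) (W_nonneg P env β k x))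
    (fun x _ => sum_pathWeight_div_W hd β k x)
    (fun τ => measurable_W_shiftEnv_envAfter β k m (walkPos τ k) measurableSet_Ici)
    (fun τ => (hlow m).trans_eq
      ((identDistrib_W_shiftEnv henv β k m _).measure_mem_eq measurableSet_Ici).symm)
  refine (ofReal_half_mul_le_measure_inter_of_le_setLIntegral
    (measurable_survivalFraction henv.meas β c k m)
    (fun x _ => survivalFraction_le_one hd β c k m x) hmean).trans
    (measure_mono fun x ⟨hxE, hxZ⟩ => ⟨hxE, ?_⟩)
  calc c * (δ / 2) * t < c * (δ / 2) * W P env β k x := by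
        have := hxE.1
        gcongr
    _ ≤ c * (W P env β k x * survivalFraction P env β c k m x) := by
        rw [mul_assoc, mul_comm (δ / 2)]
        gcongr
        · exact W_nonneg P env β k x
        · exact hxZ
    _ ≤ W P env β (k + m) x := mul_W_mul_survivalFraction_le henv hd β c k m x

lemma ofReal_half_mul_measure_lt_sup'_le (henv : IsIIDEnv P env) (hd : 0 < d) (β : ℝ)
    (hc : 0 < c) (hδ : 0 < δ) (hlow : ∀ m, ENNReal.ofReal δ ≤ P {x | c ≤ W P env β m x})
    (t : ℝ) (n : ℕ) :
    ENNReal.ofReal (δ / 2) * P {x | t < (Finset.range (n + 1)).sup' Finset.nonempty_range_add_one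
      fun k => W P env β k x} ≤ P {x | c * (δ / 2) * t < W P env β n x} := by
  set E := firstPassage (W P env β) t
  set G := {x | c * (δ / 2) * t < W P env β n x}
  have hE : ∀ k, MeasurableSet (E k) := fun k =>
    measurableSet_firstPassage t fun j _ => measurable_W henv.meas β j
  have hdisj := pairwise_disjoint_firstPassage (W P env β) t
  rw [setOf_lt_sup'_eq_biUnion_firstPassage,
    measure_biUnion_finset (hdisj.set_pairwise _) fun k _ => hE k, Finset.mul_sum]
  calc ∑ k ∈ Finset.range (n + 1), ENNReal.ofReal (δ / 2) * P (E k)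
      ≤ ∑ k ∈ Finset.range (n + 1), P (E k ∩ G) := Finset.sum_le_sum fun k hk => by
        have := ofReal_half_mul_measure_firstPassage_le henv hd β hc hδ hlow t k (n - k)
        rwa [Nat.add_sub_cancel' (Nat.lt_succ_iff.1 (Finset.mem_range.1 hk))] at this
    _ = P (⋃ k ∈ Finset.range (n + 1), E k ∩ G) :=
        (measure_biUnion_finset (f := fun k => E k ∩ G) ((hdisj.mono fun _ _ h =>
          h.mono Set.inter_subset_left Set.inter_subset_left).set_pairwise _) fun k _ =>
            (hE k).inter (measurableSet_lt measurable_const (measurable_W henv.meas β n))).symm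
    _ ≤ P G := measure_mono (Set.iUnion₂_subset fun _ _ => Set.inter_subset_right)

lemma ofReal_half_mul_lintegral_sup'_le (henv : IsIIDEnv P env) (hd : 0 < d) (β : ℝ)
    (hc : 0 < c) (hδ : 0 < δ) (hlow : ∀ m, ENNReal.ofReal δ ≤ P {x | c ≤ W P env β m x})
    (n : ℕ) :
    ENNReal.ofReal (δ / 2) * ∫⁻ x, ENNReal.ofReal
      ((Finset.range (n + 1)).sup' Finset.nonempty_range_add_one fun k => W P env β k x) ∂P ≤
        ENNReal.ofReal (c * (δ / 2))⁻¹ := by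
  simpa only [lintegral_W henv hd β n, mul_one] using mul_lintegral_le_of_mul_measure_lt_le
    (W_nonneg P env β n)
    (fun x => (W_nonneg P env β 0 x).trans
      (Finset.le_sup' (fun k => W P env β k x) (Finset.mem_range.2 n.succ_pos)))
    (measurable_W henv.meas β n)
    (Finset.measurable_range_sup'' fun k _ => measurable_W henv.meas β k) (by positivity)
    (ofReal_half_mul_measure_lt_sup'_le henv hd β hc hδ hlow · n)

end

variable {Ω : Type*} [MeasurableSpace Ω]

variable (P : Measure Ω) [IsProbabilityMeasure P]

theorem integrable_sup_of_uniformIntegrable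
    {d : ℕ} (env : ℕ × (Fin d → ℤ) → Ω → ℝ) (henv : IsIIDEnv P env)
    {β : ℝ}
    (hUI : UniformIntegrable (W P env β) 1 P) :
    (∫⁻ x, ⨆ n : ℕ, ENNReal.ofReal (W P env β n x) ∂P) < ⊤ := by
  rcases Nat.eq_zero_or_pos d with rfl | hd
  · calc (∫⁻ x, ⨆ n, ENNReal.ofReal (W P env β n x) ∂P) ≤ ∫⁻ _, 1 ∂P :=
          lintegral_mono fun x => iSup_le fun n =>
            ENNReal.ofReal_le_one.2 (W_le_one_of_dim_zero P env β n x)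
      _ < ⊤ := by simp
  obtain ⟨δ, hδ, hlow⟩ := hUI.2.1.exists_pos_forall_ofReal_le_measure (measurable_W henv.meas β)
    (W_nonneg P env β) (lintegral_W henv hd β)
  refine ENNReal.lt_top_of_mul_ne_top_right ?_ (ENNReal.ofReal_pos.2 (half_pos hδ)).ne'
  rw [lintegral_iSup_ofReal_eq_iSup_lintegral_sup' (measurable_W henv.meas β), ENNReal.mul_iSup]
  exact ne_top_of_le_ne_top ENNReal.ofReal_ne_top
    (iSup_le (ofReal_half_mul_lintegral_sup'_le henv hd β (by norm_num) hδ hlow))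

end DirectedPolymer
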